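/- Consider the heterogeneous reverse firework process on ℕ. Then ∑_{k≥1} (1 − G_{N_{n+k}}(P(R_{n+k} < k))) = +∞ for all n ∈ ℕ if and only if the quenched survival probability P(S | 𝒩 = n) equals 1 for μ-almost every environment n. -/

import Mathlib

open MeasureTheory ProbabilityTheory Filter Set
open scoped ENNReal NNReal Topology

noncomputable section

/-- The effective radius at vertex `i`: `0` if there are no stations at `i`, and the maximum
of the radii of the stations at `i` otherwise. -/
def effRadius (station : ℕ → ℕ) (r : ℕ → ℕ → ℝ) (i : ℕ) : ℝ :=
  if h : station i = 0 then 0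
  else (Finset.range (station i)).sup'
    (by simpa [Finset.nonempty_range_iff] using h) (r i)

/-- The set of activated vertices of the reverse firework process on `ℕ`:
the origin `0` is always active, and `m ≥ 1` is active iff there is an active vertex
`i < m` such that the effective radius at `m` is at least `m - i`. -/
inductive ReverseActive (station : ℕ → ℕ) (r : ℕ → ℕ → ℝ) : ℕ → Prop
  | zero : ReverseActive station r 0
  | step (i m : ℕ) : i < m → ReverseActive station r i →
      ((m : ℝ) - (i : ℝ) ≤ effRadius station r m) → ReverseActive station r m

/-- Survival of the reverse firework process: infinitely many vertices are activated. -/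
def reverseSurvives (station : ℕ → ℕ) (r : ℕ → ℕ → ℝ) : Prop :=
  {m : ℕ | ReverseActive station r m}.Infinite

/-- The probability generating function `G(t) = E[t^N]` of a law on `ℕ`. -/
def pgf (PN : Measure ℕ) (t : ℝ) : ℝ :=
  ∑' k : ℕ, (PN {k}).toReal * t ^ k

/-!
The process survives iff for every `n` some vertex `n + k + 1` has effective radius at least
`k + 1`, i.e. reaches back over `n`. Given the environment, these events for different `k`
involve disjoint families of independent radii, so the quenched probability that none of them
occurs is the infinite product `∏ₖ P(R_{n+k+1} < k + 1) ^ N_{n+k+1}`, and survival is almost sure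
iff this product vanishes for every `n`. Being nonnegative, it vanishes for almost every
environment iff its mean vanishes; by monotone convergence and independence of the `N_i` that
mean is `∏ₖ G_{N_{n+k+1}}(P(R_{n+k+1} < k + 1))`, and a product of factors in `(0, 1]` vanishes
iff the series of the defects `1 - Gₖ` diverges.
-/

lemma effRadius_lt_iff {stn : ℕ → ℕ} {r : ℕ → ℕ → ℝ} {m : ℕ} {c : ℝ} (hc : 0 < c) :
    effRadius stn r m < c ↔ ∀ j < stn m, r m j < c := by
  unfold effRadius
  split_ifs with h
  · simp [h, hc]
  · simp [Finset.sup'_lt_iff]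

lemma measurable_effRadius (stn : ℕ → ℕ) (m : ℕ) :
    Measurable fun r : ℕ → ℕ → ℝ => effRadius stn r m := by
  unfold effRadius
  split_ifs
  · exact measurable_const
  · fun_prop

lemma ReverseActive.exists_le_effRadius {stn : ℕ → ℕ} {r : ℕ → ℕ → ℝ} {m : ℕ}
    (hm : ReverseActive stn r m) :
    ∀ n < m, ∃ k : ℕ, (k : ℝ) + 1 ≤ effRadius stn r (n + k + 1) := by
  induction hm with
  | zero => intro n hn; omega
  | step i m _ _ hrad ih =>
    intro n hnm
    by_cases hni : n < i
    · exact ih n hni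
    · obtain ⟨k, rfl⟩ : ∃ k, m = n + k + 1 := ⟨m - n - 1, by omega⟩
      have hin : (i : ℝ) ≤ n := by exact_mod_cast not_lt.1 hni
      push_cast at hrad
      exact ⟨k, by linarith⟩

lemma reverseSurvives_iff {stn : ℕ → ℕ} {r : ℕ → ℕ → ℝ} :
    reverseSurvives stn r ↔ ∀ n : ℕ, ∃ k : ℕ, (k : ℝ) + 1 ≤ effRadius stn r (n + k + 1) := by
  refine ⟨fun h n => ?_, fun h hfin => ?_⟩
  · obtain ⟨m, hm, hnm⟩ := h.exists_gt n
    exact ReverseActive.exists_le_effRadius hm n hnm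
  · obtain ⟨M, hM, hmax⟩ := Set.exists_max_image _ id hfin ⟨0, .zero⟩
    obtain ⟨k, hk⟩ := h M
    have := hmax (M + k + 1) (ReverseActive.step M _ (by omega) hM (by push_cast; linarith))
    simp only [id] at this
    omega

lemma measurableSet_reverseSurvives (stn : ℕ → ℕ) :
    MeasurableSet {r | reverseSurvives stn r} := by
  simp only [reverseSurvives_iff, Set.ofPred_forall, Set.ofPred_exists]
  exact .iInter fun n => .iUnion fun k =>
    measurableSet_le measurable_const (measurable_effRadius stn _)

lemma Real.summable_log_iff_summable_one_sub {ι : Type*} {g : ι → ℝ} (h0 : ∀ i, 0 < g i)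
    (h1 : ∀ i, g i ≤ 1) :
    Summable (fun i => Real.log (g i)) ↔ Summable (fun i => 1 - g i) := by
  refine ⟨fun h => ?_, fun h => by simpa using Real.summable_log_one_add_of_summable h.neg⟩
  refine .of_nonneg_of_le (fun i => sub_nonneg.2 (h1 i)) (fun i => ?_) h.neg
  linarith [Real.log_le_sub_one_of_pos (h0 i)]

lemma Real.tendsto_prod_range_zero_iff_not_summable_one_sub {g : ℕ → ℝ} (h0 : ∀ k, 0 < g k)
    (h1 : ∀ k, g k ≤ 1) :
    Tendsto (fun K => ∏ k ∈ Finset.range K, g k) atTop (𝓝 0) ↔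
      ¬ Summable (fun k => 1 - g k) := by
  have hexp : ∀ K, ∏ k ∈ Finset.range K, g k =
      Real.exp (-∑ k ∈ Finset.range K, -Real.log (g k)) := fun K => by
    simp [Real.exp_sum, Real.exp_log (h0 _)]
  simp_rw [hexp, Real.tendsto_exp_comp_nhds_zero, tendsto_neg_atBot_iff]
  rw [← not_summable_iff_tendsto_nat_atTop_of_nonneg
    fun k => neg_nonneg.2 (Real.log_nonpos (h0 k).le (h1 k)), summable_neg_iff,
    Real.summable_log_iff_summable_one_sub h0 h1]

lemma ENNReal.antitone_prod_range {g : ℕ → ℝ≥0∞} (h1 : ∀ k, g k ≤ 1) :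
    Antitone fun K => ∏ k ∈ Finset.range K, g k :=
  antitone_nat_of_succ_le fun K => by
    rw [Finset.prod_range_succ]
    exact mul_le_of_le_one_right' (h1 K)

lemma ENNReal.iInf_prod_range_eq_zero_iff_not_summable_one_sub {g : ℕ → ℝ≥0∞}
    (h0 : ∀ k, g k ≠ 0) (h1 : ∀ k, g k ≤ 1) :
    ⨅ K, ∏ k ∈ Finset.range K, g k = 0 ↔ ¬ Summable fun k => 1 - (g k).toReal := by
  have hg : ∀ k, g k ≠ ∞ := fun k => ne_top_of_le_ne_top one_ne_top (h1 k)
  have hanti := ENNReal.antitone_prod_range h1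
  rw [← Real.tendsto_prod_range_zero_iff_not_summable_one_sub
    (fun k => ENNReal.toReal_pos (h0 k) (hg k))
    (fun k => ENNReal.toReal_le_of_le_ofReal zero_le_one (by simpa using h1 k))]
  simp_rw [← ENNReal.toReal_prod,
    ENNReal.tendsto_toReal_zero_iff fun K => ENNReal.prod_ne_top fun k _ => hg k]
  exact ⟨fun h => h ▸ tendsto_atTop_iInf hanti, iInf_eq_of_tendsto hanti⟩

section Quenched

variable {PRs : ℕ → Measure ℝ} {ν : Measure (ℕ → ℕ → ℝ)}

lemma measure_forall_effRadius_lt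
    (hRlaw : ∀ p : ℕ × ℕ, 1 ≤ p.1 → ν.map (fun r => r p.1 p.2) = PRs p.1)
    (hRindep : iIndepFun (fun (p : ℕ × ℕ) (r : ℕ → ℕ → ℝ) => r p.1 p.2) ν)
    (stn : ℕ → ℕ) {ι : Type*} (s : Finset ι) {v : ι → ℕ} (hv : v.Injective)
    (hv1 : ∀ i, 1 ≤ v i) {c : ι → ℝ} (hc : ∀ i, 0 < c i) :
    ν {r | ∀ i ∈ s, effRadius stn r (v i) < c i} =
      ∏ i ∈ s, PRs (v i) (Iio (c i)) ^ stn (v i) := by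
  have hindep : iIndepFun (fun (q : (_ : ι) × ℕ) (r : ℕ → ℕ → ℝ) => r (v q.1) q.2) ν :=
    hRindep.precomp (g := fun q : (_ : ι) × ℕ => (v q.1, q.2)) fun ⟨i, j⟩ ⟨i', j'⟩ h => by
      simp only [Prod.mk.injEq] at h
      obtain ⟨hii', rfl⟩ := h
      rw [hv hii']
  have hset : {r | ∀ i ∈ s, effRadius stn r (v i) < c i} =
      ⋂ q ∈ s.sigma fun i => Finset.range (stn (v i)),
        (fun r : ℕ → ℕ → ℝ => r (v q.1) q.2) ⁻¹' Iio (c q.1) := by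
    ext r
    simp only [effRadius_lt_iff (hc _), Sigma.forall, mem_ofPred_eq, mem_iInter,
      Finset.mem_sigma, Finset.mem_range, mem_preimage, mem_Iio]
    exact ⟨fun h i j hij => h i hij.1 j hij.2, fun h i hi j hj => h i j ⟨hi, hj⟩⟩
  rw [hset, hindep.meas_biInter fun q _ => ⟨Iio (c q.1), measurableSet_Iio, rfl⟩,
    Finset.prod_sigma]
  refine Finset.prod_congr rfl fun i _ => ?_
  rw [Finset.prod_congr rfl fun j _ => ?_, Finset.prod_const, Finset.card_range]
  rw [← Measure.map_apply (by fun_prop) measurableSet_Iio, hRlaw (v i, j) (hv1 i)]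

lemma measure_reverseSurvives_eq_one_iff [IsProbabilityMeasure ν]
    (hRlaw : ∀ p : ℕ × ℕ, 1 ≤ p.1 → ν.map (fun r => r p.1 p.2) = PRs p.1)
    (hRindep : iIndepFun (fun (p : ℕ × ℕ) (r : ℕ → ℕ → ℝ) => r p.1 p.2) ν)
    (stn : ℕ → ℕ) :
    ν {r | reverseSurvives stn r} = 1 ↔
      ∀ n : ℕ, ⨅ K : ℕ, ∏ k ∈ Finset.range K,
        PRs (n + k + 1) (Iio ((k : ℝ) + 1)) ^ stn (n + k + 1) = 0 := by
  rw [← measure_univ (μ := ν),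
    ← ae_iff_measure_eq (measurableSet_reverseSurvives stn).nullMeasurableSet]
  simp only [reverseSurvives_iff, ae_all_iff]
  refine forall_congr' fun n => ?_
  set C : ℕ → Set (ℕ → ℕ → ℝ) :=
    fun K => {r | ∀ k ∈ Finset.range K, effRadius stn r (n + k + 1) < k + 1}
  have hC : {r | ¬∃ k : ℕ, (k : ℝ) + 1 ≤ effRadius stn r (n + k + 1)} = ⋂ K, C K := by
    ext r
    simp only [C, mem_ofPred_eq, mem_iInter, Finset.mem_range, not_exists, not_le]
    exact ⟨fun h K k _ => h k, fun h k => h (k + 1) k k.lt_succ_self⟩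
  have hanti : Antitone C := fun K K' hKK' r hr k hk =>
    hr k (Finset.range_subset_range.2 hKK' hk)
  have hCmeas : ∀ K, MeasurableSet (C K) := fun K => by
    simp only [C, Set.ofPred_forall]
    exact .iInter fun k => .iInter fun _ =>
      measurableSet_lt (measurable_effRadius stn _) measurable_const
  rw [ae_iff, hC, hanti.measure_iInter (fun K => (hCmeas K).nullMeasurableSet)
    ⟨0, measure_ne_top _ _⟩]
  simp only [C, measure_forall_effRadius_lt hRlaw hRindep stn _ (v := fun k => n + k + 1)
    (fun _ _ h => by simpa using h) (fun _ => by omega) (c := fun k => (k : ℝ) + 1)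
    (fun _ => by positivity)]

end Quenched

section Annealed

lemma ae_iInf_eq_zero_iff_iInf_lintegral_eq_zero {Ω : Type*} [MeasurableSpace Ω]
    {μ : Measure Ω} {f : ℕ → Ω → ℝ≥0∞} (hf : ∀ K, Measurable (f K)) (hanti : Antitone f)
    (h0 : ∫⁻ ω, f 0 ω ∂μ ≠ ∞) :
    (∀ᵐ ω ∂μ, ⨅ K, f K ω = 0) ↔ ⨅ K, ∫⁻ ω, f K ω ∂μ = 0 := by
  rw [← lintegral_iInf hf hanti h0, lintegral_eq_zero_iff (.iInf hf)]
  rfl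

lemma toReal_lintegral_pow_eq_pgf (PN : Measure ℕ) [IsFiniteMeasure PN] {c : ℝ≥0∞}
    (hc : c ≠ ∞) :
    (∫⁻ j, c ^ j ∂PN).toReal = pgf PN c.toReal := by
  rw [lintegral_countable', ENNReal.tsum_toReal_eq fun j => by finiteness]
  simp [pgf, mul_comm]

variable {PNs : ℕ → Measure ℕ} {μ : Measure (ℕ → ℕ)}

lemma ae_iInf_prod_pow_eq_zero_iff_not_summable [∀ i, IsProbabilityMeasure (PNs i)]
    [IsProbabilityMeasure μ] (hNlaw : ∀ i : ℕ, 1 ≤ i → μ.map (fun f => f i) = PNs i)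
    (hNindep : iIndepFun (fun (i : ℕ) (f : ℕ → ℕ) => f i) μ)
    {v : ℕ → ℕ} (hv : v.Injective) (hv1 : ∀ k, 1 ≤ v k) {c : ℕ → ℝ≥0∞}
    (hc0 : ∀ k, c k ≠ 0) (hc1 : ∀ k, c k ≤ 1) :
    (∀ᵐ stn ∂μ, ⨅ K, ∏ k ∈ Finset.range K, c k ^ stn (v k) = 0) ↔
      ¬ Summable fun k => 1 - pgf (PNs (v k)) (c k).toReal := by
  have hmeas : ∀ k, Measurable fun stn : ℕ → ℕ => c k ^ stn (v k) :=
    fun k => measurable_from_nat.comp (measurable_pi_apply _)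
  have hindep : iIndepFun (fun k (stn : ℕ → ℕ) => c k ^ stn (v k)) μ :=
    (hNindep.precomp hv).comp (fun k j => c k ^ j) fun _ => measurable_from_nat
  have hlaw : ∀ k, ∫⁻ stn, c k ^ stn (v k) ∂μ = ∫⁻ j, c k ^ j ∂PNs (v k) := fun k => by
    rw [← hNlaw _ (hv1 k), lintegral_map measurable_from_nat (measurable_pi_apply _)]
  have hpos : ∀ k, ∫⁻ j, c k ^ j ∂PNs (v k) ≠ 0 := fun k => by
    simp [lintegral_eq_zero_iff measurable_from_nat, Filter.EventuallyEq, hc0,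
      IsProbabilityMeasure.ne_zero]
  have hle : ∀ k, ∫⁻ j, c k ^ j ∂PNs (v k) ≤ 1 := fun k =>
    (lintegral_mono fun j => pow_le_one' (hc1 k) j).trans_eq (by simp)
  rw [ae_iInf_eq_zero_iff_iInf_lintegral_eq_zero
    (fun K => Finset.measurable_prod _ fun k _ => hmeas k)
    (fun K K' hKK' stn => ENNReal.antitone_prod_range (fun k => pow_le_one' (hc1 k) _) hKK')
    (by simp)]
  simp_rw [lintegral_prod_eq_prod_lintegral_of_indepFun _ _ hindep hmeas, hlaw,
    ENNReal.iInf_prod_range_eq_zero_iff_not_summable_one_sub hpos hle,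
    toReal_lintegral_pow_eq_pgf _ (ne_top_of_le_ne_top ENNReal.one_ne_top (hc1 _))]

end Annealed

theorem heterogeneous_reverse_firework_as_survival_iff_general
    (PNs : ℕ → Measure ℕ) (PRs : ℕ → Measure ℝ)
    [∀ i, IsProbabilityMeasure (PNs i)] [∀ i, IsProbabilityMeasure (PRs i)]
    (μ : Measure (ℕ → ℕ)) (ν : Measure (ℕ → ℕ → ℝ))
    [IsProbabilityMeasure μ] [IsProbabilityMeasure ν]
    -- the station numbers at the vertices `i ≥ 1` are independent, `N_i` with law `PNs i`
    (hNlaw : ∀ i : ℕ, 1 ≤ i → μ.map (fun f => f i) = PNs i)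
    (hNindep : iIndepFun (fun (i : ℕ) (f : ℕ → ℕ) => f i) μ)
    -- the radii at the vertices `i ≥ 1` are independent, `R_{i,j}` with law `PRs i`
    (hRlaw : ∀ p : ℕ × ℕ, 1 ≤ p.1 → ν.map (fun r => r p.1 p.2) = PRs p.1)
    (hRindep : iIndepFun
      (fun (p : ℕ × ℕ) (r : ℕ → ℕ → ℝ) => r p.1 p.2) ν)
    -- the radii take values in `[0, ∞)` and `P(R_i < 1) ∈ (0,1)` for every `i ≥ 1`
    (hR1 : ∀ i : ℕ, 1 ≤ i → 0 < PRs i (Set.Iio (1 : ℝ)) ∧ PRs i (Set.Iio (1 : ℝ)) < 1) :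
    (∀ n : ℕ, ¬ Summable (fun k : ℕ =>
        1 - pgf (PNs (n + k + 1)) ((PRs (n + k + 1) (Set.Iio ((k : ℝ) + 1))).toReal))) ↔
      ∀ᵐ stn ∂μ, ν {r | reverseSurvives stn r} = 1 := by
  have hpos : ∀ n k, PRs (n + k + 1) (Iio ((k : ℝ) + 1)) ≠ 0 := fun n k =>
    ((hR1 _ (by omega)).1.trans_le (measure_mono (Iio_subset_Iio (by simp)))).ne'
  simp_rw [measure_reverseSurvives_eq_one_iff hRlaw hRindep, ae_all_iff]
  refine forall_congr' fun n => ?_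
  rw [ae_iInf_prod_pow_eq_zero_iff_not_summable hNlaw hNindep (v := fun k => n + k + 1)
    (fun _ _ h => by simpa using h) (fun _ => by omega) (hpos n) (fun _ => prob_le_one)]

/-- **Theorem (reverse firework, heterogeneous, part 1)**:
`∑_{k≥1} (1 − G_{N_{n+k}}(P(R_{n+k} < k))) = +∞` for all `n ∈ ℕ` if and only if the quenched
survival probability equals `1` for `μ`-almost every environment. -/
theorem heterogeneous_reverse_firework_as_survival_iff
    (PNs : ℕ → Measure ℕ) (PRs : ℕ → Measure ℝ)
    [∀ i, IsProbabilityMeasure (PNs i)] [∀ i, IsProbabilityMeasure (PRs i)]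
    (μ : Measure (ℕ → ℕ)) (ν : Measure (ℕ → ℕ → ℝ))
    [IsProbabilityMeasure μ] [IsProbabilityMeasure ν]
    -- the station numbers at the vertices `i ≥ 1` are independent, `N_i` with law `PNs i`
    (hNlaw : ∀ i : ℕ, 1 ≤ i → μ.map (fun f => f i) = PNs i)
    (hNindep : iIndepFun (fun (i : ℕ) (f : ℕ → ℕ) => f i) μ)
    -- the radii at the vertices `i ≥ 1` are independent, `R_{i,j}` with law `PRs i`
    (hRlaw : ∀ p : ℕ × ℕ, 1 ≤ p.1 → ν.map (fun r => r p.1 p.2) = PRs p.1)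
    (hRindep : iIndepFun
      (fun (p : ℕ × ℕ) (r : ℕ → ℕ → ℝ) => r p.1 p.2) ν)
    -- the radii take values in `[0, ∞)` and `P(R_i < 1) ∈ (0,1)` for every `i ≥ 1`
    (hRnonneg : ∀ i : ℕ, 1 ≤ i → PRs i (Set.Iio (0 : ℝ)) = 0)
    (hR1 : ∀ i : ℕ, 1 ≤ i → 0 < PRs i (Set.Iio (1 : ℝ)) ∧ PRs i (Set.Iio (1 : ℝ)) < 1) :
    (∀ n : ℕ, ¬ Summable (fun k : ℕ =>
        1 - pgf (PNs (n + k + 1)) ((PRs (n + k + 1) (Set.Iio ((k : ℝ) + 1))).toReal))) ↔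
      ∀ᵐ stn ∂μ, ν {r | reverseSurvives stn r} = 1 :=
  heterogeneous_reverse_firework_as_survival_iff_general PNs PRs μ ν hNlaw hNindep hRlaw hRindep hR1

end
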